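/- Let G be an AH-algebra and let g,h ∈ G with gCh and 0 ≤ g ≤ h. Then: (i) g² ≤ h², and (ii) g^(1/2) ≤ h^(1/2). -/

import Mathlib

/-- An e-ring `(R,E)`: an associative ring `R` with unity together with a set `E ⊆ R`
of effects, satisfying the Foulis axioms.  `E⁺` is realized as the additive submonoid
closure of `E` (the set of all finite sums of effects). -/
structure ERing (R : Type*) [Ring R] where
  E : Set R
  zero_mem : (0 : R) ∈ E
  one_mem : (1 : R) ∈ E
  compl_mem : ∀ e ∈ E, 1 - e ∈ E
  epos_i : ∀ a ∈ AddSubmonoid.closure E, -a ∈ AddSubmonoid.closure E → a = 0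
  epos_ii : ∀ a ∈ AddSubmonoid.closure E, 1 - a ∈ AddSubmonoid.closure E → a ∈ E
  epos_iii : ∀ a ∈ AddSubmonoid.closure E, ∀ b ∈ AddSubmonoid.closure E,
    a * b = b * a → a * b ∈ AddSubmonoid.closure E
  epos_iv : ∀ a ∈ AddSubmonoid.closure E, ∀ b ∈ AddSubmonoid.closure E,
    a * b * a ∈ AddSubmonoid.closure E
  epos_v : ∀ a ∈ AddSubmonoid.closure E, ∀ b ∈ AddSubmonoid.closure E,
    a * b * a = 0 → a * b = 0 ∧ b * a = 0
  epos_vi : ∀ a ∈ AddSubmonoid.closure E, ∀ b ∈ AddSubmonoid.closure E,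
    (a - b) ^ 2 ∈ AddSubmonoid.closure E
  zero_ne_one : (0 : R) ≠ 1

namespace ERing

variable {R : Type*} [Ring R] (er : ERing R)

/-- `E⁺`, the set of all finite sums of effects; the positive cone of the directed group. -/
def Epos : Set R := (AddSubmonoid.closure er.E : Set R)

/-- The directed group `G = E⁺ - E⁺` of the e-ring. -/
def G : Set R := {g | ∃ a ∈ er.Epos, ∃ b ∈ er.Epos, g = a - b}

/-- The partial order on the directed group: `g ≤ h` iff `h - g ∈ E⁺`. -/
def le (g h : R) : Prop := h - g ∈ er.Epos

/-- The set of projections `P = {p ∈ G : p = p²}`. -/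
def P : Set R := {p | p ∈ er.G ∧ p = p ^ 2}

/-- The commutant in `G` of a subset `A ⊆ G`. -/
def commutant (A : Set R) : Set R := {g | g ∈ er.G ∧ ∀ a ∈ A, g * a = a * g}

/-- The bicommutant in `G` of a subset `A ⊆ G`. -/
def CC (A : Set R) : Set R := er.commutant (er.commutant A)

/-- `s` is the supremum of `A` within the subset `S` (w.r.t. the e-ring order). -/
def IsSupIn (S A : Set R) (s : R) : Prop :=
  s ∈ S ∧ (∀ a ∈ A, er.le a s) ∧ ∀ b ∈ S, (∀ a ∈ A, er.le a b) → er.le s b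

/-- `s` is the infimum of `A` within the subset `S` (w.r.t. the e-ring order). -/
def IsInfIn (S A : Set R) (s : R) : Prop :=
  s ∈ S ∧ (∀ a ∈ A, er.le s a) ∧ ∀ b ∈ S, (∀ a ∈ A, er.le b a) → er.le b s

/-- Quadratic annihilation property. -/
def HasQA : Prop := ∀ g ∈ er.G, ∀ h ∈ er.G, g * h ^ 2 * g = 0 → g * h = 0 ∧ h * g = 0

/-- Commutative Vigier property: every ascending sequence of pairwise commuting elements
of `G` bounded above in `G` has a supremum in `G` which double commutes with the sequence. -/
def HasCV : Prop :=
  ∀ g : ℕ → R, (∀ n, g n ∈ er.G) → (∀ n, er.le (g n) (g (n + 1))) →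
    (∀ m n, g m * g n = g n * g m) → (∃ b ∈ er.G, ∀ n, er.le (g n) b) →
    ∃ s, er.IsSupIn er.G (Set.range g) s ∧ s ∈ er.CC (Set.range g)

/-- `G` is an abstract Hermitian (AH) algebra: there is a semitransparent effect `½`,
`G` has quadratic annihilation, and `G` has the commutative Vigier property. -/
def IsAH : Prop := (∃ h ∈ er.E, h + h = 1) ∧ er.HasQA ∧ er.HasCV

end ERing

/-!
Part (i): `h² - g² = (h - g)(h + g)` is a product of commuting positive elements.

Part (ii): square roots are built order-theoretically. For `0 ≤ x ≤ 1` the iterates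
`t₀ = 0`, `tₙ₊₁ = ½(1 - x + tₙ²)` increase, commute and stay below `1`, so the
commutative Vigier property gives a supremum `t` in the bicommutant; an archimedean
argument shows `t = ½(1 - x + t²)`, i.e. `(1 - t)² = x`. The iterates are antitone in `x`,
so `x ≤ y` gives `1 - t_x ≤ 1 - t_y`; rescaling by a power of `½` reaches arbitrary
positive `g ≤ h`. Finally the given roots `r, s` commute with the constructed ones (those
lie in `CC(g)`, `CC(h)`), and commuting positive square roots coincide by quadratic
annihilation.
-/

namespace ERing

variable {R : Type*} [Ring R] (er : ERing R)

section Cone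

lemma mem_epos_of_mem_E {e : R} (he : e ∈ er.E) : e ∈ er.Epos :=
  AddSubmonoid.subset_closure he

lemma zero_mem_epos : (0 : R) ∈ er.Epos := er.mem_epos_of_mem_E er.zero_mem

lemma one_mem_epos : (1 : R) ∈ er.Epos := er.mem_epos_of_mem_E er.one_mem

lemma add_mem_epos {a b : R} (ha : a ∈ er.Epos) (hb : b ∈ er.Epos) : a + b ∈ er.Epos :=
  AddSubmonoid.add_mem _ ha hb

lemma natCast_mul_mem_epos (n : ℕ) {a : R} (ha : a ∈ er.Epos) : (n : R) * a ∈ er.Epos := by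
  rw [← nsmul_eq_mul]
  exact AddSubmonoid.nsmul_mem _ ha n

lemma natCast_mem_epos (n : ℕ) : (n : R) ∈ er.Epos := by
  simpa using er.natCast_mul_mem_epos n er.one_mem_epos

lemma mul_mem_epos {a b : R} (ha : a ∈ er.Epos) (hb : b ∈ er.Epos) (hab : Commute a b) :
    a * b ∈ er.Epos :=
  er.epos_iii a ha b hb hab

lemma eq_zero_of_mem_epos_of_neg_mem_epos {a : R} (ha : a ∈ er.Epos) (hna : -a ∈ er.Epos) :
    a = 0 :=
  er.epos_i a ha hna

lemma mem_G_of_mem_epos {a : R} (ha : a ∈ er.Epos) : a ∈ er.G :=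
  ⟨a, ha, 0, er.zero_mem_epos, (sub_zero a).symm⟩

lemma sub_mem_G {a b : R} (ha : a ∈ er.G) (hb : b ∈ er.G) : a - b ∈ er.G := by
  obtain ⟨p, hp, q, hq, rfl⟩ := ha
  obtain ⟨p', hp', q', hq', rfl⟩ := hb
  exact ⟨p + q', er.add_mem_epos hp hq', q + p', er.add_mem_epos hq hp', by abel⟩

lemma mul_self_mem_epos {x : R} (hx : x ∈ er.G) : x * x ∈ er.Epos := by
  obtain ⟨p, hp, q, hq, rfl⟩ := hx
  simpa [pow_two, Epos] using er.epos_vi p hp q hq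

lemma mul_self_sub_mul_self_mem_epos {x y : R} (hxy : Commute x y) (hsub : y - x ∈ er.Epos)
    (hadd : y + x ∈ er.Epos) : y * y - x * x ∈ er.Epos := by
  rw [hxy.symm.mul_self_sub_mul_self_eq]
  exact er.mul_mem_epos hadd hsub (((Commute.refl y).add_left hxy).sub_right
    (hxy.symm.add_left (Commute.refl x)))

lemma exists_natCast_sub_mem_epos {a : R} (ha : a ∈ er.Epos) :
    ∃ N : ℕ, (N : R) - a ∈ er.Epos := by
  induction ha using AddSubmonoid.closure_induction with
  | mem e he => exact ⟨1, by simpa using er.mem_epos_of_mem_E (er.compl_mem e he)⟩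
  | zero => exact ⟨0, by simpa using er.zero_mem_epos⟩
  | add x y _ _ ihx ihy =>
    obtain ⟨N, hN⟩ := ihx
    obtain ⟨M, hM⟩ := ihy
    refine ⟨N + M, ?_⟩
    convert er.add_mem_epos hN hM using 1
    push_cast
    abel

end Cone

section Half

variable {c : R}

lemma half_commute (hc : c + c = 1) (z : R) : Commute c z := by
  have hz : z * c = c * (z * c) + c * (z * c) := by rw [← add_mul, hc, one_mul]
  have hz' : c * z = c * z * c + c * z * c := by rw [← mul_add, hc, mul_one]
  rw [Commute, SemiconjBy, hz, hz']
  noncomm_ring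

lemma half_mul_mem_epos (hcE : c ∈ er.E) (hc : c + c = 1) {a : R} (ha : a ∈ er.Epos) :
    c * a ∈ er.Epos :=
  er.mul_mem_epos (er.mem_epos_of_mem_E hcE) ha (half_commute hc a)

lemma half_pow_mem_epos (hcE : c ∈ er.E) (hc : c + c = 1) (n : ℕ) :
    c ^ n ∈ er.Epos := by
  induction n with
  | zero => simpa using er.one_mem_epos
  | succ n ih => rw [pow_succ']; exact er.half_mul_mem_epos hcE hc ih

lemma two_pow_mul_half_pow (hc : c + c = 1) (n : ℕ) : (2 : R) ^ n * c ^ n = 1 := by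
  rw [← (Commute.ofNat_left 2 c).mul_pow, two_mul, hc, one_pow]

lemma half_mul_add_half_mul (hc : c + c = 1) (x : R) : c * x + c * x = x := by
  rw [← add_mul, hc, one_mul]

end Half

/-- With `c = ½` the iterates increase to the least fixed point `1 - √(1 - a)` of
`t ↦ ½(a + t²)`. -/
def sqrtIter (c a : R) : ℕ → R
  | 0 => 0
  | n + 1 => c * (a + sqrtIter c a n * sqrtIter c a n)

section SqrtIter

variable {c a : R}

lemma half_mul_add_mul_self_sub_mem_epos (hcE : c ∈ er.E) (hc : c + c = 1) {a' t t' : R}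
    (ha : a' - a ∈ er.Epos) (ht : Commute t t') (hsub : t' - t ∈ er.Epos)
    (hadd : t' + t ∈ er.Epos) : c * (a' + t' * t') - c * (a + t * t) ∈ er.Epos := by
  rw [← mul_sub, show a' + t' * t' - (a + t * t) = (a' - a) + (t' * t' - t * t) by abel]
  exact er.half_mul_mem_epos hcE hc
    (er.add_mem_epos ha (er.mul_self_sub_mul_self_mem_epos ht hsub hadd))

lemma commute_sqrtIter (hc : c + c = 1) {z : R} (hz : Commute z a) :
    ∀ n, Commute z (sqrtIter c a n)
  | 0 => Commute.zero_right z
  | n + 1 =>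
    (half_commute hc z).symm.mul_right
      (hz.add_right ((commute_sqrtIter hc hz n).mul_right (commute_sqrtIter hc hz n)))

lemma sqrtIter_commute_sqrtIter (hc : c + c = 1) {a' : R} (ha : Commute a a') (m n : ℕ) :
    Commute (sqrtIter c a m) (sqrtIter c a' n) :=
  commute_sqrtIter hc (commute_sqrtIter hc ha.symm m).symm n

lemma sqrtIter_mem_epos (hcE : c ∈ er.E) (hc : c + c = 1) (ha : a ∈ er.Epos) :
    ∀ n, sqrtIter c a n ∈ er.Epos
  | 0 => er.zero_mem_epos
  | n + 1 => er.half_mul_mem_epos hcE hc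
      (er.add_mem_epos ha (er.mul_self_mem_epos (er.mem_G_of_mem_epos
        (sqrtIter_mem_epos hcE hc ha n))))

lemma one_sub_sqrtIter_mem_epos (hcE : c ∈ er.E) (hc : c + c = 1) (ha : a ∈ er.Epos)
    (ha1 : 1 - a ∈ er.Epos) : ∀ n, 1 - sqrtIter c a n ∈ er.Epos
  | 0 => by simpa [sqrtIter] using er.one_mem_epos
  | n + 1 => by
    have h := er.half_mul_add_mul_self_sub_mem_epos hcE hc ha1 (Commute.one_right _)
      (one_sub_sqrtIter_mem_epos hcE hc ha ha1 n)
      (er.add_mem_epos er.one_mem_epos (er.sqrtIter_mem_epos hcE hc ha n))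
    rwa [mul_one, mul_add, mul_one, hc] at h

lemma sqrtIter_succ_sub_mem_epos (hcE : c ∈ er.E) (hc : c + c = 1) (ha : a ∈ er.Epos) :
    ∀ n, sqrtIter c a (n + 1) - sqrtIter c a n ∈ er.Epos
  | 0 => by simpa [sqrtIter] using er.half_mul_mem_epos hcE hc ha
  | n + 1 => er.half_mul_add_mul_self_sub_mem_epos hcE hc (by simpa using er.zero_mem_epos)
      (sqrtIter_commute_sqrtIter hc (Commute.refl a) n (n + 1))
      (sqrtIter_succ_sub_mem_epos hcE hc ha n)
      (er.add_mem_epos (er.sqrtIter_mem_epos hcE hc ha _) (er.sqrtIter_mem_epos hcE hc ha n))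

lemma sqrtIter_sub_sqrtIter_mem_epos (hcE : c ∈ er.E) (hc : c + c = 1) {a' : R}
    (ha : a ∈ er.Epos) (ha' : a' ∈ er.Epos) (haa' : Commute a a') (hle : a' - a ∈ er.Epos) :
    ∀ n, sqrtIter c a' n - sqrtIter c a n ∈ er.Epos
  | 0 => by simpa [sqrtIter] using er.zero_mem_epos
  | n + 1 => er.half_mul_add_mul_self_sub_mem_epos hcE hc hle
      (sqrtIter_commute_sqrtIter hc haa' n n)
      (sqrtIter_sub_sqrtIter_mem_epos hcE hc ha ha' haa' hle n)
      (er.add_mem_epos (er.sqrtIter_mem_epos hcE hc ha' n) (er.sqrtIter_mem_epos hcE hc ha n))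

lemma eq_zero_of_forall_natCast_mul_le (hCV : er.HasCV) {v b : R} (hv : v ∈ er.Epos)
    (hb : b ∈ er.G) (hle : ∀ n : ℕ, b - n * v ∈ er.Epos) : v = 0 := by
  obtain ⟨σ, ⟨hσ, hσub, hσleast⟩, -⟩ := hCV (fun n : ℕ => (n : R) * v)
    (fun n => er.mem_G_of_mem_epos (er.natCast_mul_mem_epos n hv))
    (fun n => by simpa [ERing.le, add_mul] using hv)
    (fun m n => (((Commute.refl v).natCast_mul_left m).natCast_mul_right n).eq) ⟨b, hb, hle⟩
  have hσv : er.le σ (σ - v) := by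
    refine hσleast _ (er.sub_mem_G hσ (er.mem_G_of_mem_epos hv)) ?_
    rintro _ ⟨n, rfl⟩
    simpa [ERing.le, add_mul, sub_sub, add_comm] using hσub _ ⟨n + 1, rfl⟩
  exact er.eq_zero_of_mem_epos_of_neg_mem_epos hv (by simpa [ERing.le] using hσv)

lemma exists_isSupIn_sqrtIter (hCV : er.HasCV) (hcE : c ∈ er.E) (hc : c + c = 1)
    (ha : a ∈ er.Epos) (ha1 : 1 - a ∈ er.Epos) :
    ∃ t, er.IsSupIn er.G (Set.range (sqrtIter c a)) t ∧
      ∀ z ∈ er.G, Commute z a → Commute z t := by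
  obtain ⟨t, hsup, hCC⟩ := hCV (sqrtIter c a)
    (fun n => er.mem_G_of_mem_epos (er.sqrtIter_mem_epos hcE hc ha n))
    (er.sqrtIter_succ_sub_mem_epos hcE hc ha)
    (fun m n => sqrtIter_commute_sqrtIter hc (Commute.refl a) m n)
    ⟨1, er.mem_G_of_mem_epos er.one_mem_epos, er.one_sub_sqrtIter_mem_epos hcE hc ha ha1⟩
  refine ⟨t, hsup, fun z hz hza => (hCC.2 z ⟨hz, ?_⟩).symm⟩
  rintro _ ⟨n, rfl⟩
  exact commute_sqrtIter hc hza n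

lemma sub_mem_epos_of_isSupIn_sqrtIter (hcE : c ∈ er.E) (hc : c + c = 1) (ha : a ∈ er.Epos)
    {t : R} (hsup : er.IsSupIn er.G (Set.range (sqrtIter c a)) t) (hat : Commute a t) :
    c * (a + t * t) - t ∈ er.Epos := by
  have hle : ∀ n, t - sqrtIter c a n ∈ er.Epos := fun n => hsup.2.1 _ ⟨n, rfl⟩
  have ht : t ∈ er.Epos := by simpa [sqrtIter] using hle 0
  refine hsup.2.2 _ (er.mem_G_of_mem_epos (er.half_mul_mem_epos hcE hc
    (er.add_mem_epos ha (er.mul_self_mem_epos hsup.1)))) ?_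
  rintro _ ⟨n | n, rfl⟩
  · simpa [ERing.le, sqrtIter] using
      er.half_mul_mem_epos hcE hc (er.add_mem_epos ha (er.mul_self_mem_epos hsup.1))
  · exact er.half_mul_add_mul_self_sub_mem_epos hcE hc (by simpa using er.zero_mem_epos)
      (commute_sqrtIter hc hat.symm n).symm (hle n)
      (er.add_mem_epos ht (er.sqrtIter_mem_epos hcE hc ha n))

lemma sqrtIter_add_self_sub_natCast_mul_mem_epos (hcE : c ∈ er.E) (hc : c + c = 1)
    (ha : a ∈ er.Epos) (ha1 : 1 - a ∈ er.Epos) {t : R}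
    (hsup : er.IsSupIn er.G (Set.range (sqrtIter c a)) t) (hat : Commute a t) (n : ℕ) :
    sqrtIter c a n + sqrtIter c a n - n * (a + t * t - (t + t)) ∈ er.Epos := by
  have ht1 : 1 - t ∈ er.Epos := hsup.2.2 1 (er.mem_G_of_mem_epos er.one_mem_epos) (by
    rintro _ ⟨n, rfl⟩
    exact er.one_sub_sqrtIter_mem_epos hcE hc ha ha1 n)
  induction n with
  | zero => simpa [sqrtIter] using er.zero_mem_epos
  | succ n ih =>
    set s := sqrtIter c a n
    have hts : Commute t s := commute_sqrtIter hc hat.symm n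
    have hstep : (1 - s) * (1 - s) - (1 - t) * (1 - t) ∈ er.Epos :=
      er.mul_self_sub_mul_self_mem_epos
        ((Commute.one_left _).sub_left ((Commute.one_right t).sub_right hts))
        (by rw [sub_sub_sub_cancel_left]; exact hsup.2.1 _ ⟨n, rfl⟩)
        (er.add_mem_epos (er.one_sub_sqrtIter_mem_epos hcE hc ha ha1 n) ht1)
    have hid : sqrtIter c a (n + 1) + sqrtIter c a (n + 1) - ((n + 1 : ℕ) : R) *
        (a + t * t - (t + t)) = (s + s - n * (a + t * t - (t + t)))
          + ((1 - s) * (1 - s) - (1 - t) * (1 - t)) := by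
      rw [show sqrtIter c a (n + 1) = c * (a + s * s) from rfl, half_mul_add_half_mul hc]
      push_cast
      noncomm_ring
    rw [hid]
    exact er.add_mem_epos ih hstep

/-- The supremum `t` of the iterates is a fixed point: `t ≤ (a + t²)/2` by leastness, and
the reverse holds since `n (a + t² - 2t) ≤ 2tₙ ≤ 2` for all `n`. -/
lemma add_self_eq_of_isSupIn_sqrtIter (hCV : er.HasCV) (hcE : c ∈ er.E) (hc : c + c = 1)
    (ha : a ∈ er.Epos) (ha1 : 1 - a ∈ er.Epos) {t : R}
    (hsup : er.IsSupIn er.G (Set.range (sqrtIter c a)) t) (hat : Commute a t) :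
    t + t = a + t * t := by
  have hv : a + t * t - (t + t) ∈ er.Epos := by
    have h := er.sub_mem_epos_of_isSupIn_sqrtIter hcE hc ha hsup hat
    convert er.add_mem_epos h h using 1
    rw [sub_add_sub_comm, half_mul_add_half_mul hc]
  have hbound (n : ℕ) : (1 + 1) - n * (a + t * t - (t + t)) ∈ er.Epos := by
    have h1 := er.one_sub_sqrtIter_mem_epos hcE hc ha ha1 n
    convert er.add_mem_epos
      (er.sqrtIter_add_self_sub_natCast_mul_mem_epos hcE hc ha ha1 hsup hat n)
      (er.add_mem_epos h1 h1) using 1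
    abel
  have hv0 := er.eq_zero_of_forall_natCast_mul_le hCV hv
    (er.mem_G_of_mem_epos (er.add_mem_epos er.one_mem_epos er.one_mem_epos)) hbound
  exact (sub_eq_zero.mp hv0).symm

lemma sub_mem_epos_of_isSupIn_sqrtIter_of_le (hcE : c ∈ er.E) (hc : c + c = 1) {a' t t' : R}
    (ha : a ∈ er.Epos) (ha' : a' ∈ er.Epos) (haa' : Commute a a') (hle : a' - a ∈ er.Epos)
    (hsup : er.IsSupIn er.G (Set.range (sqrtIter c a)) t)
    (hsup' : er.IsSupIn er.G (Set.range (sqrtIter c a')) t') : t' - t ∈ er.Epos := by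
  refine hsup.2.2 t' hsup'.1 ?_
  rintro _ ⟨n, rfl⟩
  show t' - sqrtIter c a n ∈ er.Epos
  rw [← sub_add_sub_cancel t' (sqrtIter c a' n)]
  exact er.add_mem_epos (hsup'.2.1 _ ⟨n, rfl⟩)
    (er.sqrtIter_sub_sqrtIter_mem_epos hcE hc ha ha' haa' hle n)

end SqrtIter

def IsSqrt (x b : R) : Prop := b ∈ er.Epos ∧ b ^ 2 = x ∧ b ∈ er.CC {x}

lemma mem_CC_singleton {x b : R} (hb : b ∈ er.G)
    (h : ∀ z ∈ er.G, Commute z x → Commute z b) : b ∈ er.CC {x} :=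
  ⟨hb, fun z ⟨hz, hzx⟩ => (h z hz (hzx x rfl)).eq.symm⟩

variable {er} in
lemma IsSqrt.commute {x b z : R} (hb : er.IsSqrt x b) (hz : z ∈ er.G) (hzx : Commute z x) :
    Commute z b :=
  (hb.2.2.2 z ⟨hz, fun _ ha => by rw [Set.mem_singleton_iff.mp ha]; exact hzx⟩).symm

lemma isSqrt_one_sub_of_isSupIn_sqrtIter (hCV : er.HasCV) {c x t : R} (hcE : c ∈ er.E)
    (hc : c + c = 1) (hx : x ∈ er.Epos) (hx1 : 1 - x ∈ er.Epos)
    (hsup : er.IsSupIn er.G (Set.range (sqrtIter c (1 - x))) t)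
    (ht : ∀ z ∈ er.G, Commute z (1 - x) → Commute z t) : er.IsSqrt x (1 - t) := by
  have hx1' : 1 - (1 - x) ∈ er.Epos := by rwa [sub_sub_cancel]
  have hfix := er.add_self_eq_of_isSupIn_sqrtIter hCV hcE hc hx1 hx1' hsup
    (ht _ (er.mem_G_of_mem_epos hx1) (Commute.refl _))
  refine ⟨hsup.2.2 1 (er.mem_G_of_mem_epos er.one_mem_epos) ?_, ?_, er.mem_CC_singleton ?_ ?_⟩
  · rintro _ ⟨n, rfl⟩
    exact er.one_sub_sqrtIter_mem_epos hcE hc hx1 hx1' n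
  · calc (1 - t) ^ 2 = 1 - (t + t) + t * t := by noncomm_ring
      _ = x := by rw [hfix]; abel
  · exact er.sub_mem_G (er.mem_G_of_mem_epos er.one_mem_epos) hsup.1
  · intro z hz hzx
    exact (Commute.one_right z).sub_right (ht z hz ((Commute.one_right z).sub_right hzx))

lemma exists_isSqrt_pair_of_le_one (hCV : er.HasCV) {c x y : R} (hcE : c ∈ er.E)
    (hc : c + c = 1) (hx : x ∈ er.Epos) (hxy : y - x ∈ er.Epos) (hy1 : 1 - y ∈ er.Epos)
    (hC : Commute x y) : ∃ b b', er.IsSqrt x b ∧ er.IsSqrt y b' ∧ b' - b ∈ er.Epos := by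
  have hy : y ∈ er.Epos := by simpa using er.add_mem_epos hxy hx
  have hx1 : 1 - x ∈ er.Epos := by simpa using er.add_mem_epos hy1 hxy
  obtain ⟨t, hsup, ht⟩ := er.exists_isSupIn_sqrtIter hCV hcE hc hx1 (by rwa [sub_sub_cancel])
  obtain ⟨t', hsup', ht'⟩ := er.exists_isSupIn_sqrtIter hCV hcE hc hy1 (by rwa [sub_sub_cancel])
  refine ⟨1 - t, 1 - t', er.isSqrt_one_sub_of_isSupIn_sqrtIter hCV hcE hc hx hx1 hsup ht,
    er.isSqrt_one_sub_of_isSupIn_sqrtIter hCV hcE hc hy hy1 hsup' ht', ?_⟩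
  rw [sub_sub_sub_cancel_left]
  exact er.sub_mem_epos_of_isSupIn_sqrtIter_of_le hcE hc hy1 hx1
    ((Commute.one_left _).sub_left ((Commute.one_right y).sub_right hC.symm))
    (by rwa [sub_sub_sub_cancel_left]) hsup' hsup

variable {er} in
lemma IsSqrt.natCast_mul {n : ℕ} {q x b : R} (hq : (n : R) * q = 1) (hqc : ∀ z, Commute q z)
    (hb : er.IsSqrt (q * q * x) b) : er.IsSqrt x (n * b) := by
  have hnb := er.natCast_mul_mem_epos n hb.1
  refine ⟨hnb, ?_, er.mem_CC_singleton (er.mem_G_of_mem_epos hnb) fun z hz hzx => ?_⟩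
  · rw [(Nat.cast_commute n b).mul_pow, hb.2.1, ← mul_assoc, pow_two,
      (Nat.cast_commute n q).mul_mul_mul_comm, hq, one_mul, one_mul]
  · have hzq : Commute z (q * q * x) := ((hqc z).symm.mul_right (hqc z).symm).mul_right hzx
    exact (hb.commute hz hzq).natCast_mul_right n

/-- Rescaling by `q = ½ᴺ` with `h ≤ N` brings `g ≤ h` below `1`. -/
lemma exists_isSqrt_pair (hCV : er.HasCV) {c g h : R} (hcE : c ∈ er.E) (hc : c + c = 1)
    (hg : g ∈ er.Epos) (hgh : h - g ∈ er.Epos) (hC : Commute g h) :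
    ∃ r s, er.IsSqrt g r ∧ er.IsSqrt h s ∧ s - r ∈ er.Epos := by
  have hh : h ∈ er.Epos := by simpa using er.add_mem_epos hgh hg
  obtain ⟨N, hN⟩ := er.exists_natCast_sub_mem_epos hh
  set q := c ^ N
  set p : R := ((2 ^ N : ℕ) : R)
  have hpq : p * q = 1 := by
    simp only [p, q, Nat.cast_pow, Nat.cast_ofNat]
    exact two_pow_mul_half_pow hc N
  have hqc (z : R) : Commute q z := (half_commute hc z).pow_left N
  have hqqc (z : R) : Commute (q * q) z := (hqc z).mul_left (hqc z)
  have hqq : q * q ∈ er.Epos :=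
    er.mul_self_mem_epos (er.mem_G_of_mem_epos (er.half_pow_mem_epos hcE hc N))
  have hpp : p * p - N = ((2 ^ N * 2 ^ N - N : ℕ) : R) := by
    have hle : N ≤ 2 ^ N * 2 ^ N := (Nat.lt_two_pow_self.le).trans (Nat.le_mul_of_pos_left _
      (Nat.two_pow_pos N))
    rw [Nat.cast_sub hle, Nat.cast_mul]
  have hy1 : 1 - q * q * h ∈ er.Epos := by
    have e : 1 - q * q * h = q * q * ((p * p - N) + (N - h)) := by
      rw [sub_add_sub_cancel, mul_sub, (hqc p).mul_mul_mul_comm, (hqc p).eq, hpq, one_mul]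
    rw [e, hpp]
    exact er.mul_mem_epos hqq (er.add_mem_epos (er.natCast_mem_epos _) hN) (hqqc _)
  obtain ⟨b, b', hb, hb', hbb'⟩ := er.exists_isSqrt_pair_of_le_one hCV hcE hc
    (er.mul_mem_epos hqq hg (hqqc g))
    (by rw [← mul_sub]; exact er.mul_mem_epos hqq hgh (hqqc _)) hy1
    ((hqqc _).mul_left ((hqqc g).symm.mul_right hC))
  refine ⟨p * b, p * b', hb.natCast_mul hpq hqc, hb'.natCast_mul hpq hqc, ?_⟩
  rw [← mul_sub]
  exact er.natCast_mul_mem_epos _ hbb'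

lemma eq_zero_of_mul_self_eq_zero (hQA : er.HasQA) {d : R} (hd : d ∈ er.G) (h : d * d = 0) :
    d = 0 := by
  simpa using (hQA 1 (er.mem_G_of_mem_epos er.one_mem_epos) d hd (by simp [pow_two, h])).1

/-- With `d = x - y`: `d²x + d²y = d²(x + y) = d(x² - y²) = 0` forces `d²x = d²y = 0`,
so `d³ = 0`, and quadratic annihilation twice gives `d = 0`. -/
lemma eq_of_mul_self_eq_mul_self (hQA : er.HasQA) {x y : R} (hx : x ∈ er.Epos)
    (hy : y ∈ er.Epos) (hxy : Commute x y) (h : x * x = y * y) : x = y := by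
  set d := x - y
  have hdG : d ∈ er.G := er.sub_mem_G (er.mem_G_of_mem_epos hx) (er.mem_G_of_mem_epos hy)
  have hdx : Commute (d * d) x := by
    have := (Commute.refl x).sub_left hxy.symm
    exact this.mul_left this
  have hdy : Commute (d * d) y := by
    have := hxy.sub_left (Commute.refl y)
    exact this.mul_left this
  have hsum : d * d * x + d * d * y = 0 := by
    rw [← mul_add, mul_assoc, ← hxy.mul_self_sub_mul_self_eq', h, sub_self, mul_zero]
  have hddx : d * d * x = 0 := er.eq_zero_of_mem_epos_of_neg_mem_epos
    (er.mul_mem_epos (er.mul_self_mem_epos hdG) hx hdx)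
    (by rw [neg_eq_of_add_eq_zero_right hsum]
        exact er.mul_mem_epos (er.mul_self_mem_epos hdG) hy hdy)
  have hddy : d * d * y = 0 := by rwa [hddx, zero_add] at hsum
  have hddd : d * d * d = 0 := by rw [mul_sub, hddx, hddy, sub_zero]
  refine sub_eq_zero.mp (er.eq_zero_of_mul_self_eq_zero hQA hdG
    (er.eq_zero_of_mul_self_eq_zero hQA (er.mem_G_of_mem_epos (er.mul_self_mem_epos hdG)) ?_))
  rw [← mul_assoc, hddd, zero_mul]

variable {er} in
lemma IsSqrt.eq (hQA : er.HasQA) {x b r : R} (hb : er.IsSqrt x b) (hr : r ∈ er.Epos)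
    (hr2 : r ^ 2 = x) : r = b :=
  er.eq_of_mul_self_eq_mul_self hQA hr hb.1
    (hb.commute (er.mem_G_of_mem_epos hr) (hr2 ▸ Commute.self_pow r 2))
    (by rw [← pow_two, ← pow_two, hr2, hb.2.1])

end ERing

theorem stmt3_general {R : Type*} [Ring R] (er : ERing R) (hAH : er.IsAH)
    (g h : R) (hC : g * h = h * g)
    (h0g : er.le 0 g) (hgh : er.le g h)
    (r s : R) (hr0 : er.le 0 r) (hr2 : r ^ 2 = g)
    (hs0 : er.le 0 s) (hs2 : s ^ 2 = h) :
    er.le (g ^ 2) (h ^ 2) ∧ er.le r s := by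
  obtain ⟨⟨c, hcE, hc⟩, hQA, hCV⟩ := hAH
  rw [ERing.le, sub_zero] at h0g hr0 hs0
  have hh : h ∈ er.Epos := by simpa using er.add_mem_epos hgh h0g
  refine ⟨?_, ?_⟩
  · rw [ERing.le, pow_two, pow_two]
    exact er.mul_self_sub_mul_self_mem_epos hC hgh (er.add_mem_epos hh h0g)
  · obtain ⟨r', s', hr', hs', hrs'⟩ := er.exists_isSqrt_pair hCV hcE hc h0g hgh hC
    rwa [ERing.le, hr'.eq hQA hr0 hr2, hs'.eq hQA hs0 hs2]

/-- In an AH-algebra, if `gCh` and `0 ≤ g ≤ h`, then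
(i) `g² ≤ h²` and (ii) `g^(1/2) ≤ h^(1/2)` (where `r`, `s` denote the square
roots of `g`, `h`). -/
theorem stmt3 {R : Type*} [Ring R] (er : ERing R) (hAH : er.IsAH)
    (g h : R) (hg : g ∈ er.G) (hh : h ∈ er.G) (hC : g * h = h * g)
    (h0g : er.le 0 g) (hgh : er.le g h)
    (r s : R) (hr : r ∈ er.G) (hr0 : er.le 0 r) (hr2 : r ^ 2 = g)
    (hs : s ∈ er.G) (hs0 : er.le 0 s) (hs2 : s ^ 2 = h) :
    er.le (g ^ 2) (h ^ 2) ∧ er.le r s :=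
  stmt3_general er hAH g h hC h0g hgh r s hr0 hr2 hs0 hs2
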